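/- arXiv:1109.3433 — 2 statements merged into one kernel-verified Lean document; each statement's English description precedes it below -/
import Mathlib

section
/- Erdős–Ko–Rado via eigenvalue interlacing: if n ≥ 2s and U is an intersecting family of s-subsets of [n] (any two members of U have nonempty intersection), then |U| ≤ C(n−1, s−1). -/
/-- Erdős–Ko–Rado: if `n ≥ 2s` and `U` is an intersecting family of `s`-subsets of `[n]`,
then `|U| ≤ C(n−1, s−1)`. -/
theorem erdos_ko_rado (n s : ℕ) (hn : 2 * s ≤ n)
    (U : Finset (Finset (Fin n)))
    (hcard : ∀ A ∈ U, A.card = s)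
    (hint : ∀ A ∈ U, ∀ B ∈ U, (A ∩ B).Nonempty) :
    U.card ≤ (n - 1).choose (s - 1) :=
  Finset.erdos_ko_rado
    (fun A hA B hB ↦ Finset.not_disjoint_iff_nonempty_inter.2 (hint A hA B hB))
    (fun A hA ↦ hcard A hA) (by omega)
end

section
/- In the random hypergraph H^r(n,p), fix two s-sets S, T with 1 ≤ s ≤ r/2, and let d = C(n−s,r−s)p, X_S = (d_S − d)², X_T = (d_T − d)². Then E[X_S X_T] = C(n−u, r−u)·p(1−p)(1 − 6p + 6p²) + (C(n−s,r−s)² + 2·C(n−u, r−u)²)·p²(1−p)², where u = |S ∪ T|. -/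
/-!
Center the edge indicators: the `Y F = X F - p` are independent with mean `0`, variance
`v = p(1-p)` and fourth moment `m₄ = p(1-p)(1-3p+3p²)`. If `A`, `B` are the edges containing `S`,
`T`, then `∑_A Y = U + W` and `∑_B Y = V + W`, where `U`, `V`, `W` are the sums over `A \ B`,
`B \ A`, `A ∩ B`. These are independent and centered, so only four terms of `(U+W)²(V+W)²`
survive: `E[U²]E[V²] + E[U²]E[W²] + E[V²]E[W²] + E[W⁴]`. A sum of `k` of the `Y F` has second
moment `kv` and fourth moment `k m₄ + 3k(k-1)v²`, and `A ∩ B` consists of the edges containing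
`S ∪ T`.
-/

open MeasureTheory ProbabilityTheory Finset

lemma card_filter_subset_val_eq_choose {α : Type*} [Fintype α] [DecidableEq α] {r : ℕ}
    (W : Finset α) (hW : #W ≤ r) :
    #{F : {F : Finset α // #F = r} | W ⊆ F.1} = (Fintype.card α - #W).choose (r - #W) := by
  rw [← card_univ, ← card_filter_powersetCard_subset W univ r (subset_univ W) hW]
  refine card_nbij (·.1) (fun F hF => ?_) Subtype.val_injective.injOn fun G hG => ?_
  · simpa [mem_powersetCard, F.2] using hF
  · simp only [coe_filter, mem_powersetCard] at hG
    exact ⟨⟨G, hG.1.2⟩, by simpa using hG.2, rfl⟩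

section Bernoulli

variable {Ω : Type*} [MeasurableSpace Ω] {μ : Measure Ω} [IsProbabilityMeasure μ] {p : ℝ}
  {f : Ω → ℝ}

lemma ae_eq_one_or_eq_zero_of_measure_eq (hp0 : 0 ≤ p) (hp1 : p ≤ 1) (hf : Measurable f)
    (h1 : μ {ω | f ω = 1} = ENNReal.ofReal p) (h0 : μ {ω | f ω = 0} = ENNReal.ofReal (1 - p)) :
    ∀ᵐ ω ∂μ, f ω = 1 ∨ f ω = 0 := by
  have hdisj : Disjoint {ω | f ω = 1} {ω | f ω = 0} :=
    Set.disjoint_left.2 fun ω h1 h0 => one_ne_zero (h1.symm.trans h0)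
  have hunion : μ ({ω | f ω = 1} ∪ {ω | f ω = 0}) = 1 := by
    rw [measure_union hdisj (hf (measurableSet_singleton 0)), h1, h0,
      ← ENNReal.ofReal_add hp0 (by linarith)]
    norm_num
  exact (prob_compl_eq_zero_iff ((hf (measurableSet_singleton 1)).union
    (hf (measurableSet_singleton 0)))).2 hunion

lemma integral_comp_of_measure_eq (hp0 : 0 ≤ p) (hp1 : p ≤ 1) (hf : Measurable f)
    (h1 : μ {ω | f ω = 1} = ENNReal.ofReal p) (h0 : μ {ω | f ω = 0} = ENNReal.ofReal (1 - p))
    (g : ℝ → ℝ) :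
    ∫ ω, g (f ω) ∂μ = p * g 1 + (1 - p) * g 0 := by
  have hs1 : MeasurableSet {ω | f ω = 1} := hf (measurableSet_singleton 1)
  have hs0 : MeasurableSet {ω | f ω = 0} := hf (measurableSet_singleton 0)
  have hae : (fun ω => g (f ω)) =ᵐ[μ]
      {ω | f ω = 1}.indicator (fun _ => g 1) + {ω | f ω = 0}.indicator (fun _ => g 0) := by
    filter_upwards [ae_eq_one_or_eq_zero_of_measure_eq hp0 hp1 hf h1 h0] with ω hω
    rcases hω with hω | hω <;> simp [hω]
  rw [integral_congr_ae hae, integral_add' ((integrable_const _).indicator hs1)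
      ((integrable_const _).indicator hs0), integral_indicator_const _ hs1,
    integral_indicator_const _ hs0, measureReal_def, measureReal_def, h1, h0,
    ENNReal.toReal_ofReal hp0, ENNReal.toReal_ofReal (by linarith), smul_eq_mul, smul_eq_mul]

lemma memLp_top_sub_of_measure_eq (hp0 : 0 ≤ p) (hp1 : p ≤ 1) (hf : Measurable f)
    (h1 : μ {ω | f ω = 1} = ENNReal.ofReal p) (h0 : μ {ω | f ω = 0} = ENNReal.ofReal (1 - p)) :
    MemLp (fun ω => f ω - p) ⊤ μ := by
  refine memLp_top_of_bound (hf.sub measurable_const).aestronglyMeasurable 1 ?_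
  filter_upwards [ae_eq_one_or_eq_zero_of_measure_eq hp0 hp1 hf h1 h0] with ω hω
  rw [Real.norm_eq_abs, abs_le]
  rcases hω with hω | hω <;> rw [hω] <;> constructor <;> linarith

lemma integral_sub_pow_of_measure_eq (hp0 : 0 ≤ p) (hp1 : p ≤ 1) (hf : Measurable f)
    (h1 : μ {ω | f ω = 1} = ENNReal.ofReal p) (h0 : μ {ω | f ω = 0} = ENNReal.ofReal (1 - p))
    (k : ℕ) :
    ∫ ω, (f ω - p) ^ k ∂μ = p * (1 - p) ^ k + (1 - p) * (-p) ^ k := by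
  simpa using integral_comp_of_measure_eq hp0 hp1 hf h1 h0 (fun x => (x - p) ^ k)

end Bernoulli

section Independence

variable {Ω ι : Type*} [MeasurableSpace Ω] {μ : Measure Ω} {Y : ι → Ω → ℝ}

lemma ProbabilityTheory.iIndepFun.indepFun_finsetSum_prodMk_finsetSum [DecidableEq ι]
    (hY : iIndepFun Y μ) (hmeas : ∀ i, Measurable (Y i)) {s t₁ t₂ : Finset ι} (h₁ : Disjoint s t₁)
    (h₂ : Disjoint s t₂) :
    IndepFun (fun ω => ∑ i ∈ s, Y i ω) (fun ω => (∑ i ∈ t₁, Y i ω, ∑ i ∈ t₂, Y i ω)) μ := by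
  let sumOver (t : Finset ι) (y : ↥(t₁ ∪ t₂) → ℝ) : ℝ := ∑ i : ↥(t₁ ∪ t₂) with ↑i ∈ t, y i
  have hsumOver (t : Finset ι) (ht : t ⊆ t₁ ∪ t₂) (ω : Ω) :
      sumOver t (fun i => Y i ω) = ∑ i ∈ t, Y i ω := by
    rw [show sumOver t _ = _ from sum_filter _ _,
      sum_coe_sort (t₁ ∪ t₂) (fun i => if i ∈ t then Y i ω else 0), sum_ite_mem,
      inter_eq_right.2 ht]
  have key := (hY.indepFun_finset s (t₁ ∪ t₂) (disjoint_union_right.2 ⟨h₁, h₂⟩) hmeas).comp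
    (φ := fun x => ∑ i, x i) (ψ := fun y => (sumOver t₁ y, sumOver t₂ y)) (by fun_prop)
    (by fun_prop)
  convert key using 1
  · exact funext fun ω => (sum_coe_sort s (Y · ω)).symm
  · exact funext fun ω => by
      simp only [Function.comp_apply, hsumOver t₁ subset_union_left,
        hsumOver t₂ subset_union_right]

end Independence

section Moments

variable {Ω : Type*} [MeasurableSpace Ω] {μ : Measure Ω} [IsProbabilityMeasure μ]

lemma MeasureTheory.MemLp.pow_top {f : Ω → ℝ} (hf : MemLp f ⊤ μ) (k : ℕ) :
    MemLp (fun ω => f ω ^ k) ⊤ μ := by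
  induction k with
  | zero => simpa using memLp_const (1 : ℝ)
  | succ k ih => simpa only [pow_succ] using hf.mul' ih

lemma integral_add_pow_mul_of_indepFun {U V G : Ω → ℝ}
    (hUVG : IndepFun U (fun ω => (V ω, G ω)) μ) (hU : MemLp U ⊤ μ) (hV : MemLp V ⊤ μ)
    (hG : MemLp G ⊤ μ) (n : ℕ) :
    ∫ ω, (U ω + V ω) ^ n * G ω ∂μ =
      ∑ k ∈ range (n + 1), n.choose k * ((∫ ω, U ω ^ k ∂μ) * ∫ ω, V ω ^ (n - k) * G ω ∂μ) := by
  have hexpand (ω : Ω) : (U ω + V ω) ^ n * G ω =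
      ∑ k ∈ range (n + 1), n.choose k * (U ω ^ k * (V ω ^ (n - k) * G ω)) := by
    rw [add_pow, sum_mul]
    exact sum_congr rfl fun k _ => by ring
  simp_rw [hexpand]
  have hVG (k : ℕ) : MemLp (fun ω => V ω ^ k * G ω) ⊤ μ := hG.mul' (hV.pow_top k)
  have hterm (k l : ℕ) : MemLp (fun ω => U ω ^ k * (V ω ^ l * G ω)) ⊤ μ :=
    (hVG l).mul' (hU.pow_top k)
  rw [integral_finsetSum _ fun k _ => ((hterm k _).integrable le_top).const_mul _]
  refine sum_congr rfl fun k _ => ?_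
  rw [integral_const_mul]
  congr 1
  exact (hUVG.comp (ψ := fun x : ℝ × ℝ => x.1 ^ (n - k) * x.2)
    (measurable_id.pow_const k) (by fun_prop)).integral_fun_mul_eq_mul_integral
    (hU.pow_top k).aestronglyMeasurable (hVG _).aestronglyMeasurable

lemma integral_add_pow_of_indepFun {U V : Ω → ℝ} (hUV : IndepFun U V μ) (hU : MemLp U ⊤ μ)
    (hV : MemLp V ⊤ μ) (n : ℕ) :
    ∫ ω, (U ω + V ω) ^ n ∂μ =
      ∑ k ∈ range (n + 1), n.choose k * ((∫ ω, U ω ^ k ∂μ) * ∫ ω, V ω ^ (n - k) ∂μ) := by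
  simpa using integral_add_pow_mul_of_indepFun (G := fun _ => 1)
    (hUV.comp measurable_id (measurable_id.prodMk measurable_const)) hU hV (memLp_const 1) n

lemma integral_add_sq_of_indepFun {U V : Ω → ℝ} (hUV : IndepFun U V μ) (hU : MemLp U ⊤ μ)
    (hV : MemLp V ⊤ μ) (hU0 : ∫ ω, U ω ∂μ = 0) :
    ∫ ω, (U ω + V ω) ^ 2 ∂μ = ∫ ω, U ω ^ 2 ∂μ + ∫ ω, V ω ^ 2 ∂μ := by
  simp [integral_add_pow_of_indepFun hUV hU hV, sum_range_succ, hU0, add_comm]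

lemma integral_add_pow_four_of_indepFun {U V : Ω → ℝ} (hUV : IndepFun U V μ)
    (hU : MemLp U ⊤ μ) (hV : MemLp V ⊤ μ) (hU0 : ∫ ω, U ω ∂μ = 0) (hV0 : ∫ ω, V ω ∂μ = 0) :
    ∫ ω, (U ω + V ω) ^ 4 ∂μ =
      ∫ ω, U ω ^ 4 ∂μ + 6 * (∫ ω, U ω ^ 2 ∂μ) * (∫ ω, V ω ^ 2 ∂μ) + ∫ ω, V ω ^ 4 ∂μ := by
  simp [integral_add_pow_of_indepFun hUV hU hV, sum_range_succ, hU0, hV0, Nat.choose, add_comm,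
    add_left_comm, add_assoc, mul_assoc]

lemma integral_add_sq_mul_add_sq_of_indepFun {U V W : Ω → ℝ}
    (hV_UW : IndepFun V (fun ω => (U ω, W ω)) μ) (hUW : IndepFun U W μ) (hU : MemLp U ⊤ μ)
    (hV : MemLp V ⊤ μ) (hW : MemLp W ⊤ μ) (hU0 : ∫ ω, U ω ∂μ = 0) (hV0 : ∫ ω, V ω ∂μ = 0) :
    ∫ ω, (U ω + W ω) ^ 2 * (V ω + W ω) ^ 2 ∂μ =
      (∫ ω, U ω ^ 2 ∂μ + ∫ ω, W ω ^ 2 ∂μ) * ∫ ω, V ω ^ 2 ∂μ +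
        (∫ ω, U ω ^ 2 ∂μ) * (∫ ω, W ω ^ 2 ∂μ) + ∫ ω, W ω ^ 4 ∂μ := by
  have hexpandV : ∫ ω, (V ω + W ω) ^ 2 * (U ω + W ω) ^ 2 ∂μ =
      ∫ ω, (U ω + W ω) ^ 2 * W ω ^ 2 ∂μ + (∫ ω, V ω ^ 2 ∂μ) * ∫ ω, (U ω + W ω) ^ 2 ∂μ := by
    simpa [sum_range_succ, hV0, mul_comm] using integral_add_pow_mul_of_indepFun
      (hV_UW.comp measurable_id (ψ := fun z => (z.2, (z.1 + z.2) ^ 2)) (by fun_prop)) hV hW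
      ((hU.add hW).pow_top 2) 2
  have hexpandU : ∫ ω, (U ω + W ω) ^ 2 * W ω ^ 2 ∂μ =
      ∫ ω, W ω ^ 4 ∂μ + (∫ ω, U ω ^ 2 ∂μ) * ∫ ω, W ω ^ 2 ∂μ := by
    simpa [sum_range_succ, hU0, ← pow_add] using integral_add_pow_mul_of_indepFun
      (hUW.comp measurable_id (ψ := fun w => (w, w ^ 2)) (by fun_prop)) hU hW (hW.pow_top 2) 2
  calc ∫ ω, (U ω + W ω) ^ 2 * (V ω + W ω) ^ 2 ∂μ
      = ∫ ω, (V ω + W ω) ^ 2 * (U ω + W ω) ^ 2 ∂μ := by simp_rw [mul_comm]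
    _ = _ := by
      rw [hexpandV, hexpandU, integral_add_sq_of_indepFun hUW hU hW hU0]
      ring

variable {ι : Type*} {Y : ι → Ω → ℝ} {v m : ℝ}

lemma integral_finsetSum_eq_zero (hbdd : ∀ i, MemLp (Y i) ⊤ μ) (hY0 : ∀ i, ∫ ω, Y i ω ∂μ = 0)
    (s : Finset ι) : ∫ ω, ∑ i ∈ s, Y i ω ∂μ = 0 := by
  rw [integral_finsetSum _ fun i _ => (hbdd i).integrable le_top]
  exact sum_eq_zero fun i _ => hY0 i

lemma integral_finsetSum_sq [DecidableEq ι] (hY : iIndepFun Y μ)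
    (hmeas : ∀ i, Measurable (Y i)) (hbdd : ∀ i, MemLp (Y i) ⊤ μ) (hY0 : ∀ i, ∫ ω, Y i ω ∂μ = 0)
    (hY2 : ∀ i, ∫ ω, Y i ω ^ 2 ∂μ = v) (s : Finset ι) :
    ∫ ω, (∑ i ∈ s, Y i ω) ^ 2 ∂μ = #s * v := by
  induction s using Finset.induction_on with
  | empty => simp
  | insert a s ha ih =>
    have hindep := hY.indepFun_finsetSum_of_notMem hmeas ha
    rw [sum_fn] at hindep
    simp_rw [sum_insert ha, add_comm (Y a _)]
    rw [integral_add_sq_of_indepFun hindep (memLp_finsetSum s fun i _ => hbdd i) (hbdd a)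
      (integral_finsetSum_eq_zero hbdd hY0 s), ih, hY2, card_insert_of_notMem ha]
    push_cast
    ring

lemma integral_finsetSum_pow_four [DecidableEq ι] (hY : iIndepFun Y μ)
    (hmeas : ∀ i, Measurable (Y i)) (hbdd : ∀ i, MemLp (Y i) ⊤ μ) (hY0 : ∀ i, ∫ ω, Y i ω ∂μ = 0)
    (hY2 : ∀ i, ∫ ω, Y i ω ^ 2 ∂μ = v) (hY4 : ∀ i, ∫ ω, Y i ω ^ 4 ∂μ = m) (s : Finset ι) :
    ∫ ω, (∑ i ∈ s, Y i ω) ^ 4 ∂μ = #s * m + 3 * #s * (#s - 1) * v ^ 2 := by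
  induction s using Finset.induction_on with
  | empty => simp
  | insert a s ha ih =>
    have hindep := hY.indepFun_finsetSum_of_notMem hmeas ha
    rw [sum_fn] at hindep
    simp_rw [sum_insert ha, add_comm (Y a _)]
    rw [integral_add_pow_four_of_indepFun hindep (memLp_finsetSum s fun i _ => hbdd i) (hbdd a)
      (integral_finsetSum_eq_zero hbdd hY0 s) (hY0 a), ih,
      integral_finsetSum_sq hY hmeas hbdd hY0 hY2, hY2, hY4, card_insert_of_notMem ha]
    push_cast
    ring

lemma integral_finsetSum_sq_mul_finsetSum_sq [DecidableEq ι] (hY : iIndepFun Y μ)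
    (hmeas : ∀ i, Measurable (Y i)) (hbdd : ∀ i, MemLp (Y i) ⊤ μ)
    (hY0 : ∀ i, ∫ ω, Y i ω ∂μ = 0) (hY2 : ∀ i, ∫ ω, Y i ω ^ 2 ∂μ = v)
    (hY4 : ∀ i, ∫ ω, Y i ω ^ 4 ∂μ = m) (A B : Finset ι) :
    ∫ ω, (∑ i ∈ A, Y i ω) ^ 2 * (∑ i ∈ B, Y i ω) ^ 2 ∂μ =
      v ^ 2 * (#A * #B + 2 * #(A ∩ B) ^ 2) + (m - 3 * v ^ 2) * #(A ∩ B) := by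
  have hsplitA (ω : Ω) : ∑ i ∈ A, Y i ω = ∑ i ∈ A \ B, Y i ω + ∑ i ∈ A ∩ B, Y i ω := by
    rw [add_comm, sum_inter_add_sum_sdiff]
  have hsplitB (ω : Ω) : ∑ i ∈ B, Y i ω = ∑ i ∈ B \ A, Y i ω + ∑ i ∈ A ∩ B, Y i ω := by
    rw [add_comm, inter_comm, sum_inter_add_sum_sdiff]
  have hsum (s : Finset ι) : MemLp (fun ω => ∑ i ∈ s, Y i ω) ⊤ μ :=
    memLp_finsetSum s fun i _ => hbdd i
  have hV_UW := hY.indepFun_finsetSum_prodMk_finsetSum hmeas (s := B \ A) (t₁ := A \ B)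
    (t₂ := A ∩ B) disjoint_sdiff_sdiff.symm (sdiff_disjoint.mono_right inter_subset_left)
  have hUW := (hY.indepFun_finsetSum_prodMk_finsetSum hmeas (disjoint_sdiff_inter A B)
    (disjoint_sdiff_inter A B)).comp measurable_id measurable_fst
  simp_rw [hsplitA, hsplitB]
  rw [integral_add_sq_mul_add_sq_of_indepFun hV_UW hUW (hsum _) (hsum _) (hsum _)
      (integral_finsetSum_eq_zero hbdd hY0 _) (integral_finsetSum_eq_zero hbdd hY0 _),
    integral_finsetSum_sq hY hmeas hbdd hY0 hY2, integral_finsetSum_sq hY hmeas hbdd hY0 hY2,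
    integral_finsetSum_sq hY hmeas hbdd hY0 hY2,
    integral_finsetSum_pow_four hY hmeas hbdd hY0 hY2 hY4,
    ← card_sdiff_add_card_inter A B, ← card_sdiff_add_card_inter B A, inter_comm B A]
  push_cast
  ring

end Moments

theorem random_hypergraph_degree_joint_moment_general {Ω : Type*} [MeasurableSpace Ω] (μ : Measure Ω)
    [IsProbabilityMeasure μ] (n r s : ℕ) (hsr : 2 * s ≤ r)
    (p : ℝ) (hp0 : 0 ≤ p) (hp1 : p ≤ 1)
    (X : {F : Finset (Fin n) // F.card = r} → Ω → ℝ)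
    (hmeas : ∀ F, Measurable (X F))
    (hindep : iIndepFun X μ)
    (h1 : ∀ F, μ {ω | X F ω = 1} = ENNReal.ofReal p)
    (h0 : ∀ F, μ {ω | X F ω = 0} = ENNReal.ofReal (1 - p))
    (S T : Finset (Fin n)) (hS : S.card = s) (hT : T.card = s) :
    ∫ ω, (((∑ F ∈ Finset.univ.filter
          (fun F : {F : Finset (Fin n) // F.card = r} => S ⊆ F.1), X F ω) -
            ((n - s).choose (r - s) : ℝ) * p) ^ 2 *
        ((∑ F ∈ Finset.univ.filter
          (fun F : {F : Finset (Fin n) // F.card = r} => T ⊆ F.1), X F ω) -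
            ((n - s).choose (r - s) : ℝ) * p) ^ 2) ∂μ =
      ((n - (S ∪ T).card).choose (r - (S ∪ T).card) : ℝ) * p * (1 - p) *
          (1 - 6 * p + 6 * p ^ 2) +
        ((((n - s).choose (r - s) : ℝ)) ^ 2 +
            2 * (((n - (S ∪ T).card).choose (r - (S ∪ T).card) : ℝ)) ^ 2) *
          p ^ 2 * (1 - p) ^ 2 := by
  have hcard (W : Finset (Fin n)) (hW : #W ≤ r) :
      #{F : {F : Finset (Fin n) // #F = r} | W ⊆ F.1} = (n - #W).choose (r - #W) := by
    rw [card_filter_subset_val_eq_choose W hW, Fintype.card_fin]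
  have hcenter (W : Finset (Fin n)) (hW : #W = s) (ω : Ω) :
      ∑ F with W ⊆ F.1, X F ω - ((n - s).choose (r - s) : ℝ) * p =
        ∑ F with W ⊆ F.1, (X F ω - p) := by
    rw [sum_sub_distrib, sum_const, nsmul_eq_mul, hcard W (by omega), hW]
  have hmoment (F : {F : Finset (Fin n) // #F = r}) (k : ℕ) :=
    integral_sub_pow_of_measure_eq hp0 hp1 (hmeas F) (h1 F) (h0 F) k
  have hcentered : iIndepFun (fun F ω => X F ω - p) μ :=
    hindep.comp (fun _ x => x - p) fun _ => measurable_id.sub_const p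
  simp_rw [hcenter S hS, hcenter T hT]
  rw [integral_finsetSum_sq_mul_finsetSum_sq hcentered (fun F => (hmeas F).sub_const p)
      (fun F => memLp_top_sub_of_measure_eq hp0 hp1 (hmeas F) (h1 F) (h0 F))
      (fun F => by simpa [mul_comm] using hmoment F 1) (fun F => hmoment F 2)
      (fun F => hmoment F 4),
    ← filter_and]
  simp_rw [← union_subset_iff]
  rw [hcard S (by omega), hcard T (by omega),
    hcard (S ∪ T) ((card_union_le S T).trans (by omega)), hS, hT]
  ring

/-- In the random hypergraph `H^r(n,p)`, for two `s`-sets `S, T` with `1 ≤ s ≤ r/2`,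
letting `d = C(n−s,r−s)p`, `X_S = (d_S − d)²`, `X_T = (d_T − d)²`, and `u = |S ∪ T|`,
one has `E[X_S X_T] = C(n−u,r−u) p(1−p)(1−6p+6p²) + (C(n−s,r−s)² + 2 C(n−u,r−u)²) p²(1−p)²`. -/
theorem random_hypergraph_degree_joint_moment {Ω : Type*} [MeasurableSpace Ω] (μ : Measure Ω)
    [IsProbabilityMeasure μ] (n r s : ℕ) (hs : 1 ≤ s) (hsr : 2 * s ≤ r)
    (p : ℝ) (hp0 : 0 ≤ p) (hp1 : p ≤ 1)
    (X : {F : Finset (Fin n) // F.card = r} → Ω → ℝ)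
    (hmeas : ∀ F, Measurable (X F))
    (hindep : iIndepFun X μ)
    (h1 : ∀ F, μ {ω | X F ω = 1} = ENNReal.ofReal p)
    (h0 : ∀ F, μ {ω | X F ω = 0} = ENNReal.ofReal (1 - p))
    (S T : Finset (Fin n)) (hS : S.card = s) (hT : T.card = s) :
    ∫ ω, (((∑ F ∈ Finset.univ.filter
          (fun F : {F : Finset (Fin n) // F.card = r} => S ⊆ F.1), X F ω) -
            ((n - s).choose (r - s) : ℝ) * p) ^ 2 *
        ((∑ F ∈ Finset.univ.filter
          (fun F : {F : Finset (Fin n) // F.card = r} => T ⊆ F.1), X F ω) -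
            ((n - s).choose (r - s) : ℝ) * p) ^ 2) ∂μ =
      ((n - (S ∪ T).card).choose (r - (S ∪ T).card) : ℝ) * p * (1 - p) *
          (1 - 6 * p + 6 * p ^ 2) +
        ((((n - s).choose (r - s) : ℝ)) ^ 2 +
            2 * (((n - (S ∪ T).card).choose (r - (S ∪ T).card) : ℝ)) ^ 2) *
          p ^ 2 * (1 - p) ^ 2 :=
  random_hypergraph_degree_joint_moment_general μ n r s hsr p hp0 hp1 X hmeas hindep h1 h0 S T hS hT
end
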